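/- The T-step composed dynamics is Lipschitz in the policy: |P^h_{π¹}(s'|s,ω) − P^h_{π²}(s'|s,ω)| ≤ T · |A|^T · ‖π¹ − π²‖_∞, where P^h_π(s'|s,ω) := Σ_{s_1,…,s_{T−1} ∈ S, a_0,…,a_{T−1} ∈ A} ∏_{i=1}^T P(s_i|s_{i−1}, a_{i−1}) π(a_{i−1}|s_{i−1}, ω, i−1), with s_0 = s and s_T = s'. -/

import Mathlib

open Finset

/-- T-step composed dynamics (T = m+1):
P^h_π(s'|s,ω) := Σ_{s₁,…,s_{T−1}, a₀,…,a_{T−1}} ∏_{i=1}^T P(s_i|s_{i−1},a_{i−1}) π(a_{i−1}|s_{i−1},ω,i−1),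
with s₀ = s and s_T = s'. -/
noncomputable def highDyn {S A Ω : Type*} [Fintype S] [Fintype A]
    (m : ℕ) (P : S → A → S → ℝ) (π : S → Ω → Fin (m + 1) → A → ℝ)
    (s : S) (ω : Ω) (s' : S) : ℝ :=
  ∑ mid : Fin m → S, ∑ a : Fin (m + 1) → A,
    ∏ i : Fin (m + 1),
      P ((Fin.cons s (Fin.snoc mid s') : Fin (m + 2) → S) i.castSucc) (a i)
          ((Fin.cons s (Fin.snoc mid s') : Fin (m + 2) → S) i.succ) *
        π ((Fin.cons s (Fin.snoc mid s') : Fin (m + 2) → S) i.castSucc) ω i (a i)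

/-- Composition of a sequence of `n` kernels on `S`. -/
noncomputable def chainK {S : Type*} [Fintype S] [DecidableEq S] :
    (n : ℕ) → (Fin n → S → S → ℝ) → S → S → ℝ
  | 0, _, s, s' => if s = s' then 1 else 0
  | n+1, Q, s, s' => ∑ t, Q 0 s t * chainK n (fun i => Q i.succ) t s'

lemma chainK_nonneg {S : Type*} [Fintype S] [DecidableEq S] :
    ∀ (n : ℕ) (Q : Fin n → S → S → ℝ), (∀ i t t', 0 ≤ Q i t t') →
      ∀ s s', 0 ≤ chainK n Q s s'
  | 0, Q, hQ, s, s' => by simp [chainK]; positivity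
  | n+1, Q, hQ, s, s' => by
      simp only [chainK]
      exact Finset.sum_nonneg fun t _ =>
        mul_nonneg (hQ 0 s t) (chainK_nonneg n _ (fun i => hQ i.succ) t s')

lemma chainK_rowsum {S : Type*} [Fintype S] [DecidableEq S] :
    ∀ (n : ℕ) (Q : Fin n → S → S → ℝ), (∀ i t, ∑ t', Q i t t' = 1) →
      ∀ s, ∑ s', chainK n Q s s' = 1
  | 0, Q, hQ, s => by simp [chainK]
  | n+1, Q, hQ, s => by
      simp only [chainK]
      rw [Finset.sum_comm]
      have : ∀ t, ∑ s', Q 0 s t * chainK n (fun i => Q i.succ) t s' = Q 0 s t := by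
        intro t
        rw [← Finset.mul_sum, chainK_rowsum n _ (fun i => hQ i.succ) t, mul_one]
      simp only [this]
      exact hQ 0 s

lemma chainK_le_one {S : Type*} [Fintype S] [DecidableEq S]
    (n : ℕ) (Q : Fin n → S → S → ℝ) (h0 : ∀ i t t', 0 ≤ Q i t t')
    (h1 : ∀ i t, ∑ t', Q i t t' = 1) (s s' : S) : chainK n Q s s' ≤ 1 := by
  have := chainK_rowsum n Q h1 s
  calc chainK n Q s s' ≤ ∑ t', chainK n Q s t' :=
        Finset.single_le_sum (fun t _ => chainK_nonneg n Q h0 s t) (mem_univ s')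
    _ = 1 := this

lemma chainK_lipschitz {S : Type*} [Fintype S] [DecidableEq S] :
    ∀ (n : ℕ) (Q₁ Q₂ : Fin n → S → S → ℝ),
      (∀ i t t', 0 ≤ Q₁ i t t') → (∀ i t, ∑ t', Q₁ i t t' = 1) →
      (∀ i t t', 0 ≤ Q₂ i t t') → (∀ i t, ∑ t', Q₂ i t t' = 1) →
      ∀ (δ : ℝ), (∀ i t, ∑ t', |Q₁ i t t' - Q₂ i t t'| ≤ δ) →
      ∀ s s', |chainK n Q₁ s s' - chainK n Q₂ s s'| ≤ n * δ
  | 0, Q₁, Q₂, _, _, _, _, δ, hδ, s, s' => by simp [chainK]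
  | n+1, Q₁, Q₂, h10, h11, h20, h21, δ, hδ, s, s' => by
      have c1 := fun t => chainK_le_one n (fun i => Q₁ i.succ) (fun i => h10 i.succ)
        (fun i => h11 i.succ) t s'
      have c1n := fun t => chainK_nonneg n (fun i => Q₁ i.succ) (fun i => h10 i.succ) t s'
      have ih := chainK_lipschitz n (fun i => Q₁ i.succ) (fun i => Q₂ i.succ)
        (fun i => h10 i.succ) (fun i => h11 i.succ) (fun i => h20 i.succ) (fun i => h21 i.succ)
        δ (fun i t => hδ i.succ t)
      have hδ0 : 0 ≤ δ := by
        have := hδ 0 s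
        have : (0:ℝ) ≤ ∑ t', |Q₁ 0 s t' - Q₂ 0 s t'| :=
          Finset.sum_nonneg fun t _ => abs_nonneg _
        linarith [hδ 0 s]
      simp only [chainK]
      have key : ∀ t : S, Q₁ 0 s t * chainK n (fun i => Q₁ i.succ) t s'
          - Q₂ 0 s t * chainK n (fun i => Q₂ i.succ) t s'
          = (Q₁ 0 s t - Q₂ 0 s t) * chainK n (fun i => Q₁ i.succ) t s'
            + Q₂ 0 s t * (chainK n (fun i => Q₁ i.succ) t s'
              - chainK n (fun i => Q₂ i.succ) t s') := by intro t; ring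
      rw [← Finset.sum_sub_distrib]
      simp only [key]
      rw [Finset.sum_add_distrib]
      calc |∑ t, (Q₁ 0 s t - Q₂ 0 s t) * chainK n (fun i => Q₁ i.succ) t s'
            + ∑ t, Q₂ 0 s t * (chainK n (fun i => Q₁ i.succ) t s'
              - chainK n (fun i => Q₂ i.succ) t s')|
          ≤ |∑ t, (Q₁ 0 s t - Q₂ 0 s t) * chainK n (fun i => Q₁ i.succ) t s'|
            + |∑ t, Q₂ 0 s t * (chainK n (fun i => Q₁ i.succ) t s'
              - chainK n (fun i => Q₂ i.succ) t s')| := abs_add_le _ _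
        _ ≤ (∑ t, |Q₁ 0 s t - Q₂ 0 s t| * chainK n (fun i => Q₁ i.succ) t s')
            + ∑ t, Q₂ 0 s t * (n * δ) := by
            gcongr with t ht t ht
            · calc |∑ t, (Q₁ 0 s t - Q₂ 0 s t) * chainK n (fun i => Q₁ i.succ) t s'|
                  ≤ ∑ t, |(Q₁ 0 s t - Q₂ 0 s t) * chainK n (fun i => Q₁ i.succ) t s'| :=
                    Finset.abs_sum_le_sum_abs _ _
                _ = ∑ t, |Q₁ 0 s t - Q₂ 0 s t| * chainK n (fun i => Q₁ i.succ) t s' := by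
                    refine Finset.sum_congr rfl fun t _ => ?_
                    rw [abs_mul, abs_of_nonneg (c1n t)]
            · calc |∑ t, Q₂ 0 s t * (chainK n (fun i => Q₁ i.succ) t s'
                    - chainK n (fun i => Q₂ i.succ) t s')|
                  ≤ ∑ t, |Q₂ 0 s t * (chainK n (fun i => Q₁ i.succ) t s'
                    - chainK n (fun i => Q₂ i.succ) t s')| := Finset.abs_sum_le_sum_abs _ _
                _ ≤ ∑ t, Q₂ 0 s t * (n * δ) := by
                    refine Finset.sum_le_sum fun t _ => ?_
                    rw [abs_mul, abs_of_nonneg (h20 0 s t)]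
                    exact mul_le_mul_of_nonneg_left (ih t s') (h20 0 s t)
        _ ≤ (∑ t, |Q₁ 0 s t - Q₂ 0 s t| * 1) + ∑ t, Q₂ 0 s t * (n * δ) := by
            refine add_le_add_left (Finset.sum_le_sum fun t _ => ?_) _
            exact mul_le_mul_of_nonneg_left (c1 t) (abs_nonneg _)
        _ = (∑ t, |Q₁ 0 s t - Q₂ 0 s t|) + (∑ t, Q₂ 0 s t) * (n * δ) := by
            simp only [mul_one, Finset.sum_mul]
        _ ≤ δ + 1 * (n * δ) := by
            have := hδ 0 s
            rw [h21 0 s]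
            linarith
        _ ≤ (↑(n+1)) * δ := by push_cast; nlinarith

lemma chainK_succ_eq {S : Type*} [Fintype S] [DecidableEq S] :
    ∀ (n : ℕ) (Q : Fin (n+1) → S → S → ℝ) (s s' : S),
      chainK (n+1) Q s s' = ∑ mid : Fin n → S, ∏ i : Fin (n+1),
        Q i ((Fin.cons s (Fin.snoc mid s') : Fin (n+2) → S) i.castSucc)
          ((Fin.cons s (Fin.snoc mid s') : Fin (n+2) → S) i.succ)
  | 0, Q, s, s' => by
      simp [chainK, Fin.snoc_zero]
  | n+1, Q, s, s' => by
      rw [chainK]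
      have hrw : ∀ t : S, chainK (n+1) (fun i => Q i.succ) t s' =
          ∑ mid : Fin n → S, ∏ i : Fin (n+1),
            Q i.succ ((Fin.cons t (Fin.snoc mid s') : Fin (n+2) → S) i.castSucc)
              ((Fin.cons t (Fin.snoc mid s') : Fin (n+2) → S) i.succ) := fun t =>
        chainK_succ_eq n (fun i => Q i.succ) t s'
      simp only [hrw]
      rw [← Equiv.sum_comp (Fin.consEquiv (fun _ : Fin (n+1) => S))
        (fun mid' => ∏ i : Fin (n+2),
          Q i ((Fin.cons s (Fin.snoc mid' s') : Fin (n+3) → S) i.castSucc)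
            ((Fin.cons s (Fin.snoc mid' s') : Fin (n+3) → S) i.succ)),
        Fintype.sum_prod_type]
      refine Finset.sum_congr rfl fun t _ => ?_
      rw [Finset.mul_sum]
      refine Finset.sum_congr rfl fun mid _ => ?_
      have hpath : (Fin.consEquiv (fun _ : Fin (n+1) => S)) (t, mid) = Fin.cons t mid := rfl
      rw [hpath, ← Fin.cons_snoc_eq_snoc_cons]
      conv_rhs => rw [Fin.prod_univ_succ]
      congr 1

lemma highDyn_eq_chainK {S A Ω : Type*} [Fintype S] [Fintype A] [DecidableEq S]
    (m : ℕ) (P : S → A → S → ℝ) (π : S → Ω → Fin (m + 1) → A → ℝ)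
    (s : S) (ω : Ω) (s' : S) :
    highDyn m P π s ω s'
      = chainK (m+1) (fun i t t' => ∑ a : A, P t a t' * π t ω i a) s s' := by
  rw [chainK_succ_eq]
  unfold highDyn
  refine Finset.sum_congr rfl fun mid _ => ?_
  rw [Finset.prod_univ_sum, Fintype.piFinset_univ]

/-- the T-step composed dynamics is Lipschitz in the policy:
|P^h_{π¹}(s'|s,ω) − P^h_{π²}(s'|s,ω)| ≤ T · |A|^T · ‖π¹ − π²‖_∞, where T = m+1 ≥ 1. -/
theorem highDyn_lipschitz_in_policy
    {S A Ω : Type*} [Fintype S] [Fintype A] [Fintype Ω]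
    [Nonempty S] [Nonempty A] [Nonempty Ω]
    (m : ℕ) (P : S → A → S → ℝ)
    (hP0 : ∀ s a s', 0 ≤ P s a s') (hP1 : ∀ s a, ∑ s', P s a s' = 1)
    (π₁ π₂ : S → Ω → Fin (m + 1) → A → ℝ)
    (hπ₁0 : ∀ s ω i a, 0 ≤ π₁ s ω i a) (hπ₁1 : ∀ s ω i, ∑ a, π₁ s ω i a = 1)
    (hπ₂0 : ∀ s ω i a, 0 ≤ π₂ s ω i a) (hπ₂1 : ∀ s ω i, ∑ a, π₂ s ω i a = 1)
    (ε : ℝ) (hε : 0 ≤ ε)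
    (hππ : ∀ s ω i a, |π₁ s ω i a - π₂ s ω i a| ≤ ε) :
    ∀ (s s' : S) (ω : Ω),
      |highDyn m P π₁ s ω s' - highDyn m P π₂ s ω s'|
        ≤ (m + 1 : ℝ) * (Fintype.card A : ℝ) ^ (m + 1) * ε := by
  classical
  intro s s' ω
  set Q₁ : Fin (m+1) → S → S → ℝ := fun i t t' => ∑ a : A, P t a t' * π₁ t ω i a with hQ₁
  set Q₂ : Fin (m+1) → S → S → ℝ := fun i t t' => ∑ a : A, P t a t' * π₂ t ω i a with hQ₂
  have h10 : ∀ i t t', 0 ≤ Q₁ i t t' := fun i t t' =>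
    Finset.sum_nonneg fun a _ => mul_nonneg (hP0 t a t') (hπ₁0 t ω i a)
  have h20 : ∀ i t t', 0 ≤ Q₂ i t t' := fun i t t' =>
    Finset.sum_nonneg fun a _ => mul_nonneg (hP0 t a t') (hπ₂0 t ω i a)
  have h11 : ∀ i t, ∑ t', Q₁ i t t' = 1 := by
    intro i t
    simp only [hQ₁]
    rw [Finset.sum_comm]
    have : ∀ a, ∑ t', P t a t' * π₁ t ω i a = π₁ t ω i a := fun a => by
      rw [← Finset.sum_mul, hP1 t a, one_mul]
    simp only [this]
    exact hπ₁1 t ω i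
  have h21 : ∀ i t, ∑ t', Q₂ i t t' = 1 := by
    intro i t
    simp only [hQ₂]
    rw [Finset.sum_comm]
    have : ∀ a, ∑ t', P t a t' * π₂ t ω i a = π₂ t ω i a := fun a => by
      rw [← Finset.sum_mul, hP1 t a, one_mul]
    simp only [this]
    exact hπ₂1 t ω i
  have hδ : ∀ i t, ∑ t', |Q₁ i t t' - Q₂ i t t'| ≤ (Fintype.card A : ℝ) * ε := by
    intro i t
    have h1 : ∀ t', |Q₁ i t t' - Q₂ i t t'|
        ≤ ∑ a : A, P t a t' * |π₁ t ω i a - π₂ t ω i a| := by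
      intro t'
      have hd : Q₁ i t t' - Q₂ i t t'
          = ∑ a : A, P t a t' * (π₁ t ω i a - π₂ t ω i a) := by
        simp only [hQ₁, hQ₂, ← Finset.sum_sub_distrib, mul_sub]
      rw [hd]
      refine (Finset.abs_sum_le_sum_abs _ _).trans (Finset.sum_le_sum fun a _ => ?_)
      rw [abs_mul, abs_of_nonneg (hP0 t a t')]
    calc ∑ t', |Q₁ i t t' - Q₂ i t t'|
        ≤ ∑ t', ∑ a : A, P t a t' * |π₁ t ω i a - π₂ t ω i a| :=
          Finset.sum_le_sum fun t' _ => h1 t'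
      _ = ∑ a : A, (∑ t', P t a t') * |π₁ t ω i a - π₂ t ω i a| := by
          rw [Finset.sum_comm]
          simp only [Finset.sum_mul]
      _ = ∑ a : A, |π₁ t ω i a - π₂ t ω i a| := by
          refine Finset.sum_congr rfl fun a _ => ?_
          rw [hP1 t a, one_mul]
      _ ≤ ∑ _a : A, ε := Finset.sum_le_sum fun a _ => hππ t ω i a
      _ = (Fintype.card A : ℝ) * ε := by
          rw [Finset.sum_const, nsmul_eq_mul, Finset.card_univ]
  have main := chainK_lipschitz (m+1) Q₁ Q₂ h10 h11 h20 h21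
    ((Fintype.card A : ℝ) * ε) hδ s s'
  rw [highDyn_eq_chainK m P π₁ s ω s', highDyn_eq_chainK m P π₂ s ω s']
  refine main.trans ?_
  have hca : (1:ℝ) ≤ (Fintype.card A : ℝ) := by
    exact_mod_cast Fintype.card_pos
  have hpow : (Fintype.card A : ℝ) ≤ (Fintype.card A : ℝ) ^ (m+1) :=
    le_self_pow₀ hca (Nat.succ_ne_zero m)
  push_cast
  nlinarith [mul_nonneg (Nat.cast_nonneg (α := ℝ) m) hε]
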